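/- arXiv:1506.01852 — 3 statements merged into one kernel-verified Lean document; each statement's English description precedes it below -/
import Mathlib

section
/- The map T ↦ (F(T),R(T)) is a bijection from the set 𝒯 of spanning trees of the augmented graph Γ_ρ onto the set of rooted spanning forests of Γ, i.e. onto pairs (F,R) where F⊆E is an acyclic edge set (spanning forest of Γ) and R⊆V contains exactly one vertex from each connected component of the forest F on V. -/
open MeasureTheory Real Filter
open scoped BigOperators

attribute [local instance] Classical.propDecidable

namespace H22

variable {V : Type*} [Fintype V] [DecidableEq V]

/-- The augmented graph `Γ_ρ`: add an extra vertex `ρ` (encoded by `none`)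
joined to every vertex of the original graph. -/
def aug (G : SimpleGraph V) : SimpleGraph (Option V) :=
  SimpleGraph.fromRel (fun a b =>
    match a, b with
    | some i, some j => G.Adj i j
    | _, _ => True)

/-- `T` is (the edge set of) a spanning tree of `G`. -/
def IsSpanningTree {α : Type*} (G : SimpleGraph α) (T : Finset (Sym2 α)) : Prop :=
  ↑T ⊆ G.edgeSet ∧ (SimpleGraph.fromEdgeSet (↑T : Set (Sym2 α))).IsTree

/-- The finset of all spanning trees of `G`. -/
noncomputable def STrees {α : Type*} [Fintype α] [DecidableEq α] (G : SimpleGraph α) :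
    Finset (Finset (Sym2 α)) :=
  Finset.univ.filter (fun T => IsSpanningTree G T)

/-- Extension of a vector `t : V → ℝ` to `Option V` by `t_ρ := 0`. -/
def extV (t : V → ℝ) : Option V → ℝ := fun a => Option.elim a 0 t

/-- Lift of a (symmetrized) function of two vertices to unordered pairs. -/
noncomputable def esym {α : Type*} (f : α → α → ℝ) : Sym2 α → ℝ :=
  Sym2.lift ⟨fun a b => (f a b + f b a) / 2, fun a b => by ring⟩

/-- Combined edge weights on the augmented graph: `β` on edges of `Γ`,
`ε_i` on the edge `i ∼ ρ`. -/
def bres (β : V → V → ℝ) (ε : V → ℝ) : Option V → Option V → ℝ := fun a b =>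
  match a, b with
  | some i, some j => β i j
  | some i, none => ε i
  | none, some j => ε j
  | none, none => 0

/-- `B_{ij}(t,s) = cosh(t_i - t_j) + ½ (s_i - s_j)² e^{t_i+t_j}` on the augmented graph. -/
noncomputable def Bfun (t s : V → ℝ) (a b : Option V) : ℝ :=
  Real.cosh (extV t a - extV t b) +
    (1 / 2) * (extV s a - extV s b) ^ 2 * Real.exp (extV t a + extV t b)

/-- Weight `β_{ij} e^{t_i+t_j}` of an edge of the augmented graph. -/
noncomputable def treeW (β : V → V → ℝ) (ε : V → ℝ) (t : V → ℝ) : Sym2 (Option V) → ℝ :=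
  esym (fun a b => bres β ε a b * Real.exp (extV t a + extV t b))

/-- Gibbs factor `e^{-β_{ij}(B_{ij}(t,s)-1)}` of an edge of the augmented graph. -/
noncomputable def gibbs (β : V → V → ℝ) (ε : V → ℝ) (t s : V → ℝ) : Sym2 (Option V) → ℝ :=
  esym (fun a b => Real.exp (-(bres β ε a b * (Bfun t s a b - 1))))

/-- The density of the measure `μ^ε` with respect to
(Lebesgue on `ℝ^V × ℝ^V`) × (counting measure on spanning trees). -/
noncomputable def dens (G : SimpleGraph V) (β : V → V → ℝ) (ε : V → ℝ)
    (t s : V → ℝ) (T : Finset (Sym2 (Option V))) : ℝ :=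
  (∏ j, Real.exp (-t j) / (2 * Real.pi)) *
  (∏ e ∈ Finset.univ.filter (fun e : Sym2 (Option V) => e ∈ (aug G).edgeSet),
      gibbs β ε t s e) *
  (∏ e ∈ T, treeW β ε t e)

/-- Expectation of an observable `f(t,s,T)` under the measure `μ^ε`. -/
noncomputable def expect (G : SimpleGraph V) (β : V → V → ℝ) (ε : V → ℝ)
    (f : (V → ℝ) → (V → ℝ) → Finset (Sym2 (Option V)) → ℝ) : ℝ :=
  ∑ T ∈ STrees (aug G), ∫ p : (V → ℝ) × (V → ℝ), dens G β ε p.1 p.2 T * f p.1 p.2 T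

/-- The weighted graph Laplacian `A(t)` of `Γ`. -/
noncomputable def Amat (G : SimpleGraph V) (β : V → V → ℝ) (t : V → ℝ) : Matrix V V ℝ :=
  Matrix.of fun i j =>
    if i = j then ∑ k ∈ Finset.univ.filter (fun k => G.Adj k j), β k j * Real.exp (t k + t j)
    else if G.Adj i j then -(β i j * Real.exp (t i + t j)) else 0

/-- The pinning diagonal matrix `ε̂(t) = diag(ε_i e^{t_i})`. -/
noncomputable def epsHat (ε : V → ℝ) (t : V → ℝ) : Matrix V V ℝ :=
  Matrix.diagonal fun i => ε i * Real.exp (t i)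

/-- The Green's function `G^ε_{xy} = e^{t_x+t_y} (A(t)+ε̂(t))⁻¹_{xy}`. -/
noncomputable def Gfun (G : SimpleGraph V) (β : V → V → ℝ) (ε : V → ℝ)
    (t : V → ℝ) (x y : V) : ℝ :=
  Real.exp (t x + t y) * (Amat G β t + epsHat ε t)⁻¹ x y

/-- The edge `i ∼ ρ` of the augmented graph. -/
def rootEdge (i : V) : Sym2 (Option V) := s(some i, none)

/-- The set of roots `R(T) = {i ∈ V : (i ∼ ρ) ∈ T}`. -/
noncomputable def roots (T : Finset (Sym2 (Option V))) : Finset V :=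
  Finset.univ.filter fun i => rootEdge i ∈ T

/-- The forest `F(T) = T ∩ E`: edges of `T` not incident to `ρ`. -/
noncomputable def forestOf (T : Finset (Sym2 (Option V))) : Finset (Sym2 (Option V)) :=
  T.filter fun e => ¬ ((none : Option V) ∈ e)

/-- `x ↔_T y`: `x` and `y` are connected in `T` through a path not using `ρ`. -/
def connIn (T : Finset (Sym2 (Option V))) (x y : V) : Prop :=
  (SimpleGraph.fromEdgeSet (↑(forestOf T) : Set (Sym2 (Option V)))).Reachable (some x) (some y)

/-- The observable `O^π_{xy}`. -/
noncomputable def obs (pv : V → ℝ) (x y : V) (t : V → ℝ)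
    (T : Finset (Sym2 (Option V))) : ℝ :=
  Real.exp (t x + t y) / (pv x * Real.exp (t x) + pv y * Real.exp (t y)) *
    (if rootEdge x ∈ T ∧ connIn T x y then 1 else 0)

/-- The pinning `ε = (π_i ε)_{i ∈ V}`. -/
def pinOf (pv : V → ℝ) (ε : ℝ) : V → ℝ := fun i => pv i * ε

/-- The pinning `c δ_x` concentrated at the single vertex `x`. -/
def singlePin (x : V) (c : ℝ) : V → ℝ := fun i => if i = x then c else 0

end H22

namespace H22

/-- The spanning forest `F(T) = T ∩ E` of `Γ`, viewed as a finset of edges of `Γ`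
(i.e. unordered pairs of vertices of `V`). -/
noncomputable def FofV {V : Type*} [Fintype V] [DecidableEq V]
    (T : Finset (Sym2 (Option V))) : Finset (Sym2 V) :=
  Finset.univ.filter fun e => Sym2.map some e ∈ T

/-! A loop-free edge set `T` of `Γ_ρ` is the cone over the graph `(V, F(T))` with apex `ρ`
joined to `R(T)`, and it is recovered from the pair `(F(T), R(T))`. Such a cone is connected
iff every component of `F` meets `R`. It is acyclic iff `F` is acyclic and no component of `F`
holds two roots: a cycle through `ρ` leaves and re-enters `ρ` through roots `r ≠ r'` that are
joined by a path of `F`, and conversely such a path closes up through `ρ` into a cycle. -/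

section Cone

open SimpleGraph

variable {V : Type*}

def coneGraph (H : SimpleGraph V) (R : Set V) : SimpleGraph (Option V) where
  Adj
    | some i, some j => H.Adj i j
    | some i, none => i ∈ R
    | none, some j => j ∈ R
    | none, none => False
  symm := ⟨by rintro (_ | _) (_ | _) h <;> first | exact h | exact h.symm⟩
  loopless := ⟨by rintro (_ | i) h; exacts [h, H.loopless.irrefl i h]⟩

variable {H : SimpleGraph V} {R : Set V}

@[simp] lemma coneGraph_adj_some_some {i j : V} :
    (coneGraph H R).Adj (some i) (some j) ↔ H.Adj i j := .rfl

@[simp] lemma coneGraph_adj_some_none {i : V} : (coneGraph H R).Adj (some i) none ↔ i ∈ R :=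
  .rfl

@[simp] lemma coneGraph_adj_none_some {j : V} : (coneGraph H R).Adj none (some j) ↔ j ∈ R :=
  .rfl

lemma map_some_mem_edgeSet_coneGraph {e : Sym2 V} :
    Sym2.map some e ∈ (coneGraph H R).edgeSet ↔ e ∈ H.edgeSet := by
  induction e using Sym2.ind with
  | _ i j => rfl

def coneGraph.someHom (H : SimpleGraph V) (R : Set V) : H →g coneGraph H R := ⟨some, id⟩

def coneGraph.induceNeNoneHom (H : SimpleGraph V) (R : Set V) :
    (coneGraph H R).induce {x | x ≠ none} →g H where
  toFun x := x.1.get (Option.ne_none_iff_isSome.mp x.2)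
  map_rel' := by
    rintro ⟨_ | i, hi⟩ ⟨_ | j, hj⟩ h
    all_goals first | exact absurd rfl hi | exact absurd rfl hj | exact h

lemma coneGraph.induceNeNoneHom_injective :
    Function.Injective (coneGraph.induceNeNoneHom H R) := by
  rintro ⟨_ | i, hi⟩ ⟨_ | j, hj⟩ h
  all_goals first | exact absurd rfl hi | exact absurd rfl hj | exact Subtype.ext (congrArg some h)

lemma exists_root_of_walk_none :
    ∀ {v : V} (p : (coneGraph H R).Walk (some v) none),
      ∃ r ∈ R, H.Reachable v r ∧ s(some r, none) ∈ p.edges := by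
  intro v p
  generalize hu : some v = u at p
  generalize hw : (none : Option V) = w at p
  induction p generalizing v with
  | nil => cases hu.trans hw.symm
  | @cons _ y _ h p ih =>
    subst hu hw
    cases y with
    | none => exact ⟨v, h, .refl _, by simp⟩
    | some w =>
      obtain ⟨r, hr, hwr, he⟩ := ih rfl rfl
      exact ⟨r, hr, (show H.Adj v w from h).reachable.trans hwr, by simp [he]⟩

lemma coneGraph_connected_iff :
    (coneGraph H R).Connected ↔ ∀ v, ∃ r ∈ R, H.Reachable v r := by
  constructor
  · intro hK v
    obtain ⟨r, hr, hvr, -⟩ := exists_root_of_walk_none (hK.preconnected (some v) none).some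
    exact ⟨r, hr, hvr⟩
  · intro h
    refine (connected_iff_exists_forall_reachable _).mpr ⟨none, ?_⟩
    rintro (_ | v)
    · rfl
    · obtain ⟨r, hr, hvr⟩ := h v
      exact ((hvr.map (coneGraph.someHom H R)).trans
        (show (coneGraph H R).Adj (some r) none from hr).reachable).symm

lemma coneGraph_isAcyclic_iff :
    (coneGraph H R).IsAcyclic ↔
      H.IsAcyclic ∧ ∀ r ∈ R, ∀ r' ∈ R, H.Reachable r r' → r = r' := by
  constructor
  · intro hK
    refine ⟨hK.comap (coneGraph.someHom H R) (Option.some_injective V), ?_⟩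
    rintro r hr r' hr' ⟨p⟩
    let q : (coneGraph H R).Walk (some r) (some r') := p.toPath.1.map (coneGraph.someHom H R)
    have hq : (Walk.cons (show (coneGraph H R).Adj none (some r) from hr) q).IsPath := by
      rw [Walk.cons_isPath_iff]
      refine ⟨p.toPath.2.map (Option.some_injective V), ?_⟩
      simp [q, coneGraph.someHom]
    have := hK.eq_snd_of_adj_start hq (show (coneGraph H R).Adj none (some r') from hr')
      (by simp [q])
    simpa using this.symm
  · rintro ⟨hH, huniq⟩
    have through_none : ∀ c : (coneGraph H R).Walk none none, ¬ c.IsCycle := by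
      rintro (_ | ⟨h, q⟩) hc
      · exact hc.ne_nil rfl
      rename_i y
      cases y with
      | none => exact h
      | some r₁ =>
        rw [Walk.cons_isCycle_iff] at hc
        obtain ⟨r, hr, hr₁r, he⟩ := exists_root_of_walk_none q
        obtain rfl := huniq r₁ h r hr hr₁r
        exact hc.2 (Sym2.eq_swap ▸ he)
    intro x c hc
    by_cases hn : none ∈ c.support
    · exact through_none _ (hc.rotate hn)
    · let s : Set (Option V) := {x | x ≠ none}
      have hs : ∀ y ∈ c.support, y ∈ s := fun y hy h => hn (h ▸ hy)
      let ι := (Embedding.induce (G := coneGraph H R) s).toHom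
      refine hH.comap _ coneGraph.induceNeNoneHom_injective (c.induce s hs) ?_
      rwa [← Walk.isCycle_map_iff_of_injective (f := ι)
        (Embedding.induce (G := coneGraph H R) s).injective,
        Walk.map_induce]

lemma coneGraph_isTree_iff :
    (coneGraph H R).IsTree ↔ H.IsAcyclic ∧ ∀ v, ∃! r, r ∈ R ∧ H.Reachable v r := by
  rw [isTree_iff, coneGraph_connected_iff, coneGraph_isAcyclic_iff]
  constructor
  · rintro ⟨hex, hH, huniq⟩
    refine ⟨hH, fun v => ?_⟩
    obtain ⟨r, hr, hvr⟩ := hex v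
    exact ⟨r, ⟨hr, hvr⟩,
      fun r' ⟨hr', hvr'⟩ => (huniq r hr r' hr' (hvr.symm.trans hvr')).symm⟩
  · rintro ⟨hH, hex⟩
    exact ⟨fun v => (hex v).exists, hH,
      fun r hr r' hr' hrr' => (hex r).unique ⟨hr, .refl r⟩ ⟨hr', hrr'⟩⟩

end Cone

section RootedForest

open SimpleGraph

variable {V : Type*}

lemma aug_eq_coneGraph (G : SimpleGraph V) : aug G = coneGraph G Set.univ := by
  ext (_ | i) (_ | j)
  all_goals simp [aug, G.adj_comm]
  exact Adj.ne

lemma rootEdge_injective : Function.Injective (rootEdge (V := V)) := by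
  intro i j h
  simpa [rootEdge] using h

lemma none_notMem_map_some (e : Sym2 V) : none ∉ Sym2.map some e := by
  simp [Sym2.mem_map]

lemma map_some_ne_rootEdge (e : Sym2 V) (i : V) : Sym2.map some e ≠ rootEdge i :=
  fun h => none_notMem_map_some e (h ▸ Sym2.mem_mk_right _ _)

lemma sym2_option_cases (e : Sym2 (Option V)) :
    (∃ f, e = Sym2.map some f) ∨ (∃ i, e = rootEdge i) ∨ e = s(none, none) := by
  induction e using Sym2.ind with
  | _ a b =>
    cases a with
    | none => cases b with
      | none => exact .inr (.inr rfl)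
      | some j => exact .inr (.inl ⟨j, Sym2.eq_swap⟩)
    | some i => cases b with
      | none => exact .inr (.inl ⟨i, rfl⟩)
      | some j => exact .inl ⟨s(i, j), rfl⟩

variable [DecidableEq V]

/-- The inverse of `T ↦ (F(T), R(T))` on loop-free edge sets `T`. -/
noncomputable def liftForest (F : Finset (Sym2 V)) (R : Finset V) : Finset (Sym2 (Option V)) :=
  F.image (Sym2.map some) ∪ R.image rootEdge

variable {F : Finset (Sym2 V)} {R : Finset V}

lemma map_some_mem_liftForest {e : Sym2 V} : Sym2.map some e ∈ liftForest F R ↔ e ∈ F := by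
  simp [liftForest, (Sym2.map.injective (Option.some_injective V)).eq_iff,
    (map_some_ne_rootEdge _ _).symm]

lemma rootEdge_mem_liftForest {i : V} : rootEdge i ∈ liftForest F R ↔ i ∈ R := by
  simp [liftForest, rootEdge_injective.eq_iff, map_some_ne_rootEdge]

lemma diag_notMem_liftForest : s(none, none) ∉ liftForest F R := by
  simp only [liftForest, Finset.mem_union, Finset.mem_image, not_or, not_exists, not_and]
  exact ⟨fun e _ h => none_notMem_map_some e (h ▸ Sym2.mem_mk_left _ _),
    fun i _ h => by simp [rootEdge] at h⟩

lemma fromEdgeSet_liftForest :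
    fromEdgeSet ↑(liftForest F R) =
      coneGraph (fromEdgeSet ↑F) (↑R : Set V) := by
  ext (_ | i) (_ | j)
  · simp
  · simpa [rootEdge, Sym2.eq_swap] using rootEdge_mem_liftForest (F := F) (R := R) (i := j)
  · simpa [rootEdge] using rootEdge_mem_liftForest (F := F) (R := R) (i := i)
  · simpa using fun _ : i ≠ j => map_some_mem_liftForest (F := F) (R := R) (e := s(i, j))

lemma liftForest_subset_edgeSet_aug_iff {G : SimpleGraph V} :
    ↑(liftForest F R) ⊆ (aug G).edgeSet ↔ ↑F ⊆ G.edgeSet := by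
  rw [aug_eq_coneGraph]
  constructor
  · intro h e he
    exact map_some_mem_edgeSet_coneGraph.mp (h (map_some_mem_liftForest.mpr he))
  · intro h e he
    obtain ⟨f, hf, rfl⟩ | ⟨i, -, rfl⟩ :=
      (Finset.mem_union.mp he).imp Finset.mem_image.mp Finset.mem_image.mp
    · exact map_some_mem_edgeSet_coneGraph.mpr (h hf)
    · exact Set.mem_univ i

lemma isSpanningTree_aug_liftForest_iff {G : SimpleGraph V} :
    IsSpanningTree (aug G) (liftForest F R) ↔
      ↑F ⊆ G.edgeSet ∧ (fromEdgeSet (↑F : Set (Sym2 V))).IsAcyclic ∧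
        ∀ v, ∃! r, r ∈ R ∧ (fromEdgeSet (↑F : Set (Sym2 V))).Reachable v r := by
  rw [IsSpanningTree, liftForest_subset_edgeSet_aug_iff, fromEdgeSet_liftForest,
    coneGraph_isTree_iff]
  simp only [Finset.mem_coe]

variable [Fintype V]

lemma FofV_liftForest : FofV (liftForest F R) = F := by
  ext e
  simp [FofV, map_some_mem_liftForest]

lemma roots_liftForest : roots (liftForest F R) = R := by
  ext i
  simp [roots, rootEdge_mem_liftForest]

lemma liftForest_FofV_roots {T : Finset (Sym2 (Option V))} (hT : s(none, none) ∉ T) :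
    liftForest (FofV T) (roots T) = T := by
  ext e
  obtain ⟨f, rfl⟩ | ⟨i, rfl⟩ | rfl := sym2_option_cases e
  · simp [map_some_mem_liftForest, FofV]
  · simp [rootEdge_mem_liftForest, roots]
  · simp [diag_notMem_liftForest, hT]

end RootedForest

theorem stmt_2_general {V : Type*} [Fintype V] [DecidableEq V]
    (G : SimpleGraph V) :
    Set.BijOn (fun T => (FofV T, roots T))
      {T : Finset (Sym2 (Option V)) | IsSpanningTree (aug G) T}
      {p : Finset (Sym2 V) × Finset V |
        ↑p.1 ⊆ G.edgeSet ∧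
        (SimpleGraph.fromEdgeSet (↑p.1 : Set (Sym2 V))).IsAcyclic ∧
        ∀ v : V, ∃! r : V, r ∈ p.2 ∧
          (SimpleGraph.fromEdgeSet (↑p.1 : Set (Sym2 V))).Reachable v r} := by
  have no_loop {T} (hT : IsSpanningTree (aug G) T) : s(none, none) ∉ T :=
    fun h => (aug G).loopless.irrefl none (hT.1 h)
  refine ⟨fun T hT => ?_, fun T₁ hT₁ T₂ hT₂ heq => ?_, fun ⟨F, R⟩ hFR => ?_⟩
  · rw [← liftForest_FofV_roots (no_loop hT)] at hT
    exact isSpanningTree_aug_liftForest_iff.mp hT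
  · rw [← liftForest_FofV_roots (no_loop hT₁), ← liftForest_FofV_roots (no_loop hT₂)]
    simp_all only [Prod.mk.injEq]
  · exact ⟨liftForest F R, isSpanningTree_aug_liftForest_iff.mpr hFR,
      by simp [FofV_liftForest, roots_liftForest]⟩

/-- the map `T ↦ (F(T), R(T))` is a bijection from the set of spanning
trees of the augmented graph `Γ_ρ` onto the set of rooted spanning forests of `Γ`, i.e.
pairs `(F, R)` where `F ⊆ E` is acyclic and `R` contains exactly one vertex from each
connected component of the forest `F` on `V`. -/
theorem stmt_2 {V : Type*} [Fintype V] [DecidableEq V]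
    (G : SimpleGraph V) (hG : G.Connected) :
    Set.BijOn (fun T => (FofV T, roots T))
      {T : Finset (Sym2 (Option V)) | IsSpanningTree (aug G) T}
      {p : Finset (Sym2 V) × Finset V |
        ↑p.1 ⊆ G.edgeSet ∧
        (SimpleGraph.fromEdgeSet (↑p.1 : Set (Sym2 V))).IsAcyclic ∧
        ∀ v : V, ∃! r : V, r ∈ p.2 ∧
          (SimpleGraph.fromEdgeSet (↑p.1 : Set (Sym2 V))).Reachable v r} :=
  stmt_2_general G

end H22
end

section
/- For all ε>0, with pinning ε=(π_i ε)_{i∈V}, E_{μ^ε}[O^π_xy · 1{R(T)={x}}] ≤ e^{Σ_{i∈V∖{x}} ε_i} · E_{μ^{ε_xδ_x}}[O^π_xy]. -/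
open MeasureTheory Real Filter
open scoped BigOperators

attribute [local instance] Classical.propDecidable

/-!
On a spanning tree `T` with `R(T) = {x}` the density of `μ^ε` is pointwise at most that of
`μ^{ε_x δ_x}`: the tree weights only see the pinning at the roots, and every Gibbs factor
`e^{-ε_i (B_{iρ} - 1)}` is at most `1` because `B ≥ 1`; the prefactor `e^{Σ ε_i}` is `≥ 1`.
The real content is that the integrand of `μ^{ε_x δ_x}` is integrable. Drop
every Gibbs factor except those along a breadth-first tree of `Γ` rooted at `x`, extended by the
edge `x ∼ ρ`. In the shear coordinates `t_j - t_{parent j}` (a unimodular change of variables)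
the `s`-integral is Gaussian and costs a factor `e^{O(Σ |t_k|)}`, which the remaining factors
`e^{-β (cosh (t_j - t_{parent j}) - 1)}` absorb.
-/

namespace H22

open scoped Matrix

lemma sq_div_four_le_cosh_sub_one (u : ℝ) : u ^ 2 / 4 ≤ cosh u - 1 := by
  rw [← cosh_abs, ← sq_abs, cosh_eq]
  nlinarith [quadratic_le_exp_of_nonneg (abs_nonneg u), add_one_le_exp (-|u|)]

lemma integrable_exp_mul_abs_sub_mul_cosh (a : ℝ) {d : ℝ} (hd : 0 < d) :
    Integrable fun u : ℝ => exp (a * |u| - d * (cosh u - 1)) := by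
  refine ((integrable_exp_neg_mul_sq (by positivity : 0 < d / 8)).const_mul
    (exp (2 * a ^ 2 / d))).mono' (by fun_prop) (ae_of_all _ fun u => ?_)
  rw [norm_of_nonneg (exp_pos _).le, ← exp_add]
  refine exp_le_exp.2 ?_
  have hamgm : a * |u| ≤ 2 * a ^ 2 / d + d / 8 * u ^ 2 := by
    have h : 0 ≤ (d * |u| - 4 * a) ^ 2 / (8 * d) := by positivity
    have h' : (d * |u| - 4 * a) ^ 2 / (8 * d) = 2 * a ^ 2 / d + d / 8 * u ^ 2 - a * |u| := by
      field_simp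
      rw [← sq_abs u]
      ring
    linarith
  nlinarith [sq_div_four_le_cosh_sub_one u]

lemma sqrt_pi_div_le {b u S : ℝ} (hb : 0 < b) (hu : -u ≤ 2 * S) :
    √(π / (b * exp u / 2)) ≤ √(2 * π / b) * exp S := by
  rw [← sqrt_sq (exp_pos S).le, ← sqrt_mul (by positivity)]
  refine sqrt_le_sqrt ?_
  calc π / (b * exp u / 2) = 2 * π / b * exp (-u) := by rw [exp_neg]; field_simp
    _ ≤ 2 * π / b * exp S ^ 2 := by rw [← exp_nat_mul]; gcongr; push_cast; linarith

section

variable {V : Type*} {G : SimpleGraph V} {β : V → V → ℝ} {ε : V → ℝ}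

lemma exists_adj_dist_lt_of_connected (hG : G.Connected) {z j : V} (hj : j ≠ z) :
    ∃ k, G.Adj j k ∧ G.dist z k < G.dist z j := by
  obtain ⟨w, hw⟩ := hG.exists_walk_length_eq_dist j z
  cases w with
  | nil => exact absurd rfl hj
  | @cons _ k _ hjk w =>
    refine ⟨k, hjk, ?_⟩
    have := G.dist_le w
    rw [SimpleGraph.Walk.length_cons] at hw
    rw [G.dist_comm, G.dist_comm (u := z)]
    omega

@[fun_prop]
lemma continuous_extV (a : Option V) : Continuous fun t : V → ℝ => extV t a := by
  cases a
  · exact continuous_const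
  · exact continuous_apply _

lemma extV_zero (a : Option V) : extV 0 a = 0 := by
  cases a <;> rfl

lemma esym_mk {α : Type*} (f : α → α → ℝ) (a b : α) : esym f s(a, b) = (f a b + f b a) / 2 :=
  rfl

lemma bres_comm (hβ : ∀ i j, β i j = β j i) (ε : V → ℝ) (a b : Option V) :
    bres β ε a b = bres β ε b a := by
  cases a <;> cases b <;> simp [bres, hβ]

lemma bres_nonneg (hβpos : ∀ i j, G.Adj i j → 0 < β i j) (hε : ∀ i, 0 ≤ ε i)
    {a b : Option V} (h : s(a, b) ∈ (aug G).edgeSet) : 0 ≤ bres β ε a b := by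
  rw [SimpleGraph.mem_edgeSet, aug, SimpleGraph.fromRel_adj] at h
  cases a <;> cases b
  · exact le_rfl
  · exact hε _
  · exact hε _
  · rcases h.2 with h' | h'
    · exact (hβpos _ _ h').le
    · exact (hβpos _ _ h'.symm).le

lemma Bfun_comm (t s : V → ℝ) (a b : Option V) : Bfun t s a b = Bfun t s b a := by
  rw [Bfun, Bfun, ← cosh_neg, neg_sub, add_comm (extV t a), ← neg_sub (extV s b), neg_sq]

lemma one_le_Bfun (t s : V → ℝ) (a b : Option V) : 1 ≤ Bfun t s a b := by
  have := one_le_cosh (extV t a - extV t b)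
  rw [Bfun]
  nlinarith [mul_nonneg (sq_nonneg (extV s a - extV s b)) (exp_pos (extV t a + extV t b)).le]

lemma exp_neg_mul_Bfun_sub_one (b : ℝ) (t s : V → ℝ) (a c : Option V) :
    exp (-(b * (Bfun t s a c - 1))) = exp (-(b * (cosh (extV t a - extV t c) - 1))) *
      exp (-(b * exp (extV t a + extV t c) / 2) * (extV s a - extV s c) ^ 2) := by
  rw [← exp_add, Bfun]
  ring_nf

lemma gibbs_mk (hβ : ∀ i j, β i j = β j i) (ε : V → ℝ) (t s : V → ℝ) (a b : Option V) :
    gibbs β ε t s s(a, b) = exp (-(bres β ε a b * (Bfun t s a b - 1))) := by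
  rw [gibbs, esym_mk, bres_comm hβ ε b a, Bfun_comm t s b a, add_self_div_two]

lemma treeW_mk (hβ : ∀ i j, β i j = β j i) (ε : V → ℝ) (t : V → ℝ) (a b : Option V) :
    treeW β ε t s(a, b) = bres β ε a b * exp (extV t a + extV t b) := by
  rw [treeW, esym_mk, bres_comm hβ ε b a, add_comm (extV t b), add_self_div_two]

lemma gibbs_pos (β : V → V → ℝ) (ε : V → ℝ) (t s : V → ℝ) (e : Sym2 (Option V)) :
    0 < gibbs β ε t s e := by
  induction e using Sym2.ind with
  | _ a b => exact half_pos (add_pos (exp_pos _) (exp_pos _))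

lemma gibbs_le_one (hβpos : ∀ i j, G.Adj i j → 0 < β i j) (hε : ∀ i, 0 ≤ ε i) (t s : V → ℝ)
    {e : Sym2 (Option V)} (he : e ∈ (aug G).edgeSet) : gibbs β ε t s e ≤ 1 := by
  have hle : ∀ a b, s(a, b) ∈ (aug G).edgeSet →
      exp (-(bres β ε a b * (Bfun t s a b - 1))) ≤ 1 := fun a b h =>
    exp_le_one_iff.2 (neg_nonpos.2
      (mul_nonneg (bres_nonneg hβpos hε h) (sub_nonneg.2 (one_le_Bfun t s a b))))
  induction e using Sym2.ind with
  | _ a b =>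
    rw [gibbs, esym_mk]
    linarith [hle a b he, hle b a (by rwa [Sym2.eq_swap])]

lemma gibbs_anti {ε' : V → ℝ} (hle : ∀ i, ε' i ≤ ε i) (t s : V → ℝ) (e : Sym2 (Option V)) :
    gibbs β ε t s e ≤ gibbs β ε' t s e := by
  have hbres : ∀ a b, bres β ε' a b ≤ bres β ε a b := by
    intro a b
    cases a <;> cases b <;> simp [bres, hle]
  induction e using Sym2.ind with
  | _ a b =>
    rw [gibbs, gibbs, esym_mk, esym_mk]
    have hab := sub_nonneg.2 (one_le_Bfun t s a b)
    have hba := sub_nonneg.2 (one_le_Bfun t s b a)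
    gcongr <;> apply hbres

lemma treeW_nonneg (hβpos : ∀ i j, G.Adj i j → 0 < β i j) (hε : ∀ i, 0 ≤ ε i) (t : V → ℝ)
    {e : Sym2 (Option V)} (he : e ∈ (aug G).edgeSet) : 0 ≤ treeW β ε t e := by
  induction e using Sym2.ind with
  | _ a b =>
    have hab := bres_nonneg hβpos hε he
    have hba := bres_nonneg hβpos hε (by rwa [Sym2.eq_swap] : s(b, a) ∈ (aug G).edgeSet)
    rw [treeW, esym_mk]
    positivity

@[fun_prop]
lemma continuous_gibbs (β : V → V → ℝ) (ε : V → ℝ) (e : Sym2 (Option V)) :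
    Continuous fun q : (V → ℝ) × (V → ℝ) => gibbs β ε q.1 q.2 e := by
  induction e using Sym2.ind with
  | _ a b =>
    simp only [gibbs, esym_mk, Bfun]
    fun_prop

@[fun_prop]
lemma continuous_treeW (β : V → V → ℝ) (ε : V → ℝ) (e : Sym2 (Option V)) :
    Continuous fun t : V → ℝ => treeW β ε t e := by
  induction e using Sym2.ind with
  | _ a b =>
    simp only [treeW, esym_mk]
    fun_prop

lemma pinOf_nonneg {pv : V → ℝ} {c : ℝ} (hpv : ∀ i, 0 ≤ pv i) (hc : 0 ≤ c) (i : V) :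
    0 ≤ pinOf pv c i :=
  mul_nonneg (hpv i) hc

section DecidableEq

variable [DecidableEq V] {pv : V → ℝ} {c : ℝ} {x y : V}

lemma obs_nonneg (hpy : 0 ≤ pv y) (hpx : 0 < pv x) (t : V → ℝ) (T : Finset (Sym2 (Option V))) :
    0 ≤ obs pv x y t T := by
  have : 0 < pv x * exp (t x) + pv y * exp (t y) := by positivity
  unfold obs
  split_ifs <;> positivity

lemma singlePin_nonneg (hc : 0 ≤ c) (i : V) : 0 ≤ singlePin x c i := by
  unfold singlePin
  split_ifs
  exacts [hc, le_rfl]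

lemma singlePin_le_pinOf (hpv : ∀ i, 0 ≤ pv i) (hc : 0 ≤ c) (i : V) :
    singlePin x (pv x * c) i ≤ pinOf pv c i := by
  unfold singlePin
  split_ifs with h
  exacts [h ▸ le_rfl, pinOf_nonneg hpv hc i]

end DecidableEq

variable [Fintype V] {T : Finset (Sym2 (Option V))}

lemma abs_extV_le (t : V → ℝ) (a : Option V) : |extV t a| ≤ ∑ k, |t k| := by
  cases a with
  | none => simpa [extV] using Finset.sum_nonneg fun k _ => abs_nonneg (t k)
  | some i =>
    exact Finset.single_le_sum (f := fun k => |t k|) (fun _ _ => abs_nonneg _)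
      (Finset.mem_univ i)

lemma treeW_le (hβ : ∀ i j, β i j = β j i) (hβpos : ∀ i j, G.Adj i j → 0 < β i j)
    (hε : ∀ i, 0 ≤ ε i) (t : V → ℝ) {e : Sym2 (Option V)} (he : e ∈ (aug G).edgeSet) :
    treeW β ε t e ≤ treeW β ε 0 e * exp (2 * ∑ k, |t k|) := by
  induction e using Sym2.ind with
  | _ a b =>
    rw [treeW_mk hβ, treeW_mk hβ, extV_zero, extV_zero, add_zero, exp_zero, mul_one]
    refine mul_le_mul_of_nonneg_left (exp_le_exp.2 ?_) (bres_nonneg hβpos hε he)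
    linarith [abs_extV_le t a, abs_extV_le t b, le_abs_self (extV t a), le_abs_self (extV t b)]

lemma prod_treeW_le (hβ : ∀ i j, β i j = β j i) (hβpos : ∀ i j, G.Adj i j → 0 < β i j)
    (hε : ∀ i, 0 ≤ ε i) (hT : ↑T ⊆ (aug G).edgeSet) (t : V → ℝ) :
    ∏ e ∈ T, treeW β ε t e ≤ (∏ e ∈ T, treeW β ε 0 e) * exp (2 * T.card * ∑ k, |t k|) :=
  calc ∏ e ∈ T, treeW β ε t e ≤ ∏ e ∈ T, treeW β ε 0 e * exp (2 * ∑ k, |t k|) :=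
        Finset.prod_le_prod (fun e he => treeW_nonneg hβpos hε t (hT he))
          fun e he => treeW_le hβ hβpos hε t (hT he)
    _ = _ := by
        rw [Finset.prod_mul_distrib, Finset.prod_const, ← exp_nat_mul]
        ring_nf

lemma prod_exp_neg_div_two_pi_le (t : V → ℝ) :
    ∏ j, exp (-t j) / (2 * π) ≤ exp (∑ k, |t k|) := by
  rw [exp_sum]
  refine Finset.prod_le_prod (fun j _ => by positivity) fun j _ => ?_
  calc exp (-t j) / (2 * π) ≤ exp (-t j) :=
        div_le_self (exp_pos _).le (by linarith [pi_gt_three])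
    _ ≤ exp |t j| := exp_le_exp.2 (neg_le_abs _)

lemma dens_nonneg (hβpos : ∀ i j, G.Adj i j → 0 < β i j) (hε : ∀ i, 0 ≤ ε i)
    (hT : ↑T ⊆ (aug G).edgeSet) (t s : V → ℝ) :
    0 ≤ dens G β ε t s T :=
  mul_nonneg (mul_nonneg (Finset.prod_nonneg fun j _ => by positivity)
    (Finset.prod_nonneg fun e _ => (gibbs_pos β ε t s e).le))
    (Finset.prod_nonneg fun e he => treeW_nonneg hβpos hε t (hT he))

variable [DecidableEq V]

lemma obs_le {pv : V → ℝ} {x y : V} (hpy : 0 ≤ pv y) (hpx : 0 < pv x) (t : V → ℝ)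
    (T : Finset (Sym2 (Option V))) : obs pv x y t T ≤ exp (∑ k, |t k|) / pv x := by
  have hty : exp (t y) ≤ exp (∑ k, |t k|) :=
    exp_le_exp.2 ((le_abs_self _).trans (abs_extV_le t (some y)))
  calc obs pv x y t T
      ≤ exp (t x + t y) / (pv x * exp (t x) + pv y * exp (t y)) := by
        unfold obs
        split_ifs
        · rw [mul_one]
        · rw [mul_zero]; positivity
    _ ≤ exp (t x + t y) / (pv x * exp (t x)) :=
        div_le_div_of_nonneg_left (exp_pos _).le (by positivity)
          (le_add_of_nonneg_right (by positivity))
    _ = exp (t y) / pv x := by rw [exp_add]; field_simp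
    _ ≤ exp (∑ k, |t k|) / pv x := by gcongr

section ParentForest

/- `par` is a forest on `V` oriented towards `ρ`: `par j = none` means that the parent of `j`
is `ρ`. A rank `r` decreasing along parent edges makes `t ↦ t - t ∘ par` unimodular. -/
variable (par : V → Option V)

def shearMat : Matrix V V ℝ := 1 - Matrix.of fun j k => if par j = some k then 1 else 0

lemma shearMat_mulVec (t : V → ℝ) (j : V) :
    (shearMat par *ᵥ t) j = t j - extV t (par j) := by
  rw [shearMat, Matrix.sub_mulVec, Matrix.one_mulVec]
  cases h : par j <;> simp [Matrix.mulVec, dotProduct, h, extV]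

variable {par} {r : V → ℕ} (hr : ∀ j k, par j = some k → r k < r j)
include hr

lemma det_shearMat : (shearMat par).det = 1 := by
  have htri : (shearMat par).BlockTriangular fun j => OrderDual.toDual (r j) := by
    intro j k hjk
    have hlt : r j < r k := hjk
    have hne : j ≠ k := by rintro rfl; exact lt_irrefl _ hlt
    have hpar : par j ≠ some k := fun h => (hr j k h).not_gt hlt
    simp [shearMat, hpar, Matrix.one_apply_ne hne]
  rw [htri.det]
  refine Finset.prod_eq_one fun a _ => ?_
  have hblock : (shearMat par).toSquareBlock (fun j => OrderDual.toDual (r j)) a = 1 := by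
    ext ⟨j, hj⟩ ⟨k, hk⟩
    have hpar : par j ≠ some k := fun h =>
      (hr j k h).ne (OrderDual.toDual.injective (hk.trans hj.symm))
    simp [Matrix.toSquareBlock_def, shearMat, hpar, Matrix.one_apply]
  rw [hblock, Matrix.det_one]

lemma measurePreserving_shearMat :
    MeasurePreserving (Matrix.toLin' (shearMat par)) volume volume := by
  refine ⟨(Matrix.toLin' (shearMat par)).continuous_of_finiteDimensional.measurable, ?_⟩
  simpa [det_shearMat hr] using
    Real.map_matrix_volume_pi_eq_smul_volume_pi (M := shearMat par) (by simp [det_shearMat hr])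

lemma abs_le_mul_sum_abs_shearMat_mulVec (t : V → ℝ) (j : V) :
    |t j| ≤ (r j + 1) * ∑ k, |(shearMat par *ᵥ t) k| := by
  set S := ∑ k, |(shearMat par *ᵥ t) k|
  have hS : ∀ k, |(shearMat par *ᵥ t) k| ≤ S := fun k =>
    Finset.single_le_sum (f := fun k => |(shearMat par *ᵥ t) k|) (fun _ _ => abs_nonneg _)
      (Finset.mem_univ k)
  have hS0 : 0 ≤ S := (abs_nonneg _).trans (hS j)
  induction hn : r j using Nat.strong_induction_on generalizing j with
  | _ n ih =>
    have hj := shearMat_mulVec par t j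
    cases hp : par j with
    | none =>
      rw [hp, extV, Option.elim_none, sub_zero] at hj
      rw [← hj]
      nlinarith [hS j]
    | some k =>
      rw [hp, extV, Option.elim_some] at hj
      have hk := ih (r k) (hn ▸ hr j k hp) k rfl
      have hrk : (r k : ℝ) + 1 ≤ n := by exact_mod_cast hn ▸ hr j k hp
      calc |t j| = |(shearMat par *ᵥ t) j + t k| := by rw [hj]; ring_nf
        _ ≤ S + (r k + 1) * S := (abs_add_le _ _).trans (add_le_add (hS j) hk)
        _ ≤ (n + 1) * S := by nlinarith

lemma integrable_exp_mul_sum_abs_mul_prod_exp_cosh {b : V → ℝ} (hb : ∀ j, 0 < b j)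
    {A : ℝ} (hA : 0 ≤ A) :
    Integrable fun t : V → ℝ =>
      exp (A * ∑ k, |t k|) * ∏ j, exp (-(b j * (cosh ((shearMat par *ᵥ t) j) - 1))) := by
  set C : ℝ := ∑ k, ((r k : ℝ) + 1)
  set g : (V → ℝ) → ℝ := fun u => ∏ j, exp (A * C * |u j| - b j * (cosh (u j) - 1))
  have hg : Integrable g :=
    Integrable.fintype_prod fun j => integrable_exp_mul_abs_sub_mul_cosh _ (hb j)
  refine ((measurePreserving_shearMat hr).integrable_comp_of_integrable hg).mono'
    (by fun_prop) (ae_of_all _ fun t => ?_)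
  have hsum : ∑ k, |t k| ≤ C * ∑ j, |(shearMat par *ᵥ t) j| := by
    rw [Finset.sum_mul]
    exact Finset.sum_le_sum fun k _ => abs_le_mul_sum_abs_shearMat_mulVec hr t k
  simp only [g, Function.comp_apply, Matrix.toLin'_apply]
  rw [norm_of_nonneg (by positivity), ← exp_sum, ← exp_sum, ← exp_add, Finset.sum_sub_distrib,
    ← Finset.mul_sum]
  refine exp_le_exp.2 ?_
  rw [Finset.sum_neg_distrib, mul_assoc]
  nlinarith

lemma integral_prod_exp_neg_mul_shearMat_mulVec_sq (a : V → ℝ) :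
    ∫ s, ∏ j, exp (-a j * (shearMat par *ᵥ s) j ^ 2) = ∏ j, √(π / a j) := by
  have hmp := measurePreserving_shearMat hr
  have h := integral_map (μ := volume) hmp.measurable.aemeasurable
    (Continuous.aestronglyMeasurable (f := fun u : V → ℝ => ∏ j, exp (-a j * u j ^ 2))
      (by fun_prop))
  rw [hmp.map_eq] at h
  simp only [Matrix.toLin'_apply] at h
  rw [← h, integral_fintype_prod_volume_eq_prod (f := fun j (u : ℝ) => exp (-a j * u ^ 2))]
  exact Finset.prod_congr rfl fun j _ => integral_gaussian (a j)

lemma integrable_prod_exp_neg_mul_shearMat_mulVec_sq {a : V → ℝ} (ha : ∀ j, 0 < a j) :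
    Integrable fun s : V → ℝ => ∏ j, exp (-a j * (shearMat par *ᵥ s) j ^ 2) :=
  (measurePreserving_shearMat hr).integrable_comp_of_integrable
    (g := fun u : V → ℝ => ∏ j, exp (-a j * u j ^ 2))
    (Integrable.fintype_prod fun j => integrable_exp_neg_mul_sq (ha j))

lemma integrable_mul_prod_exp_neg_mul_shearMat_mulVec_sq {Φ : (V → ℝ) → ℝ}
    {a : (V → ℝ) → V → ℝ} (hΦ : Continuous Φ) (hΦ0 : ∀ t, 0 ≤ Φ t)
    (ha : ∀ j, Continuous fun t => a t j) (ha0 : ∀ t j, 0 < a t j)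
    (hint : Integrable fun t => Φ t * ∏ j, √(π / a t j)) :
    Integrable fun q : (V → ℝ) × (V → ℝ) =>
      Φ q.1 * ∏ j, exp (-a q.1 j * (shearMat par *ᵥ q.2) j ^ 2) := by
  rw [Measure.volume_eq_prod, integrable_prod_iff (by fun_prop)]
  refine ⟨ae_of_all _ fun t =>
    (integrable_prod_exp_neg_mul_shearMat_mulVec_sq hr (ha0 t)).const_mul (Φ t),
    hint.congr (ae_of_all _ fun t => ?_)⟩
  have hnorm : ∀ s, ‖Φ t * ∏ j, exp (-a t j * (shearMat par *ᵥ s) j ^ 2)‖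
      = Φ t * ∏ j, exp (-a t j * (shearMat par *ᵥ s) j ^ 2) := fun s =>
    norm_of_nonneg (mul_nonneg (hΦ0 t) (by positivity))
  simp only [hnorm]
  rw [integral_const_mul, integral_prod_exp_neg_mul_shearMat_mulVec_sq hr]

theorem integrable_exp_mul_prod_exp_neg_mul_Bfun_parent {b : V → ℝ} (hb : ∀ j, 0 < b j)
    {A : ℝ} (hA : 0 ≤ A) :
    Integrable fun q : (V → ℝ) × (V → ℝ) =>
      exp (A * ∑ k, |q.1 k|) * ∏ j, exp (-(b j * (Bfun q.1 q.2 (some j) (par j) - 1))) := by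
  set a : (V → ℝ) → V → ℝ := fun t j => b j * exp (t j + extV t (par j)) / 2
  set Φ : (V → ℝ) → ℝ := fun t =>
    exp (A * ∑ k, |t k|) * ∏ j, exp (-(b j * (cosh ((shearMat par *ᵥ t) j) - 1)))
  have hsplit : (fun q : (V → ℝ) × (V → ℝ) =>
      exp (A * ∑ k, |q.1 k|) * ∏ j, exp (-(b j * (Bfun q.1 q.2 (some j) (par j) - 1))))
      = fun q => Φ q.1 * ∏ j, exp (-a q.1 j * (shearMat par *ᵥ q.2) j ^ 2) := by
    ext q
    simp only [Φ, a, exp_neg_mul_Bfun_sub_one, shearMat_mulVec, Finset.prod_mul_distrib, mul_assoc]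
    rfl
  rw [hsplit]
  refine integrable_mul_prod_exp_neg_mul_shearMat_mulVec_sq hr (by fun_prop)
    (fun t => by positivity) (fun j => by fun_prop) (fun t j => by have := hb j; positivity) ?_
  refine ((integrable_exp_mul_sum_abs_mul_prod_exp_cosh hr hb
    (A := A + Fintype.card V) (by positivity)).const_mul (∏ j, √(2 * π / b j))).mono'
    (Measurable.aestronglyMeasurable (by fun_prop)) (ae_of_all _ fun t => ?_)
  set S := ∑ k, |t k|
  have hprod : ∏ j, √(π / a t j) ≤ (∏ j, √(2 * π / b j)) * exp (Fintype.card V * S) := by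
    rw [exp_nat_mul, ← Finset.card_univ, ← Finset.prod_const, ← Finset.prod_mul_distrib]
    refine Finset.prod_le_prod (fun j _ => sqrt_nonneg _) fun j _ => sqrt_pi_div_le (hb j) ?_
    have htj : |t j| ≤ S := abs_extV_le t (some j)
    linarith [abs_extV_le t (par j), neg_le_abs (t j), neg_le_abs (extV t (par j))]
  have hΦ : 0 ≤ Φ t := by positivity
  rw [norm_of_nonneg (by positivity)]
  calc Φ t * ∏ j, √(π / a t j)
      ≤ Φ t * ((∏ j, √(2 * π / b j)) * exp (Fintype.card V * S)) :=
        mul_le_mul_of_nonneg_left hprod hΦ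
    _ = _ := by simp only [Φ, S, add_mul, exp_add]; ring

lemma prod_gibbs_le_prod_parent (hβ : ∀ i j, β i j = β j i)
    (hβpos : ∀ i j, G.Adj i j → 0 < β i j) (hε : ∀ i, 0 ≤ ε i)
    (hpar : ∀ j k, par j = some k → G.Adj j k) (t s : V → ℝ) :
    ∏ e ∈ Finset.univ.filter (fun e : Sym2 (Option V) => e ∈ (aug G).edgeSet), gibbs β ε t s e
      ≤ ∏ j, exp (-(bres β ε (some j) (par j) * (Bfun t s (some j) (par j) - 1))) := by
  have hinj : Function.Injective fun j => s(some j, par j) := by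
    intro j k h
    rcases Sym2.eq_iff.1 h with ⟨hjk, -⟩ | ⟨hjk, hkj⟩
    · exact Option.some_injective _ hjk
    · exact absurd (hr j k hkj) (hr k j hjk.symm).asymm
  have hsub : Finset.univ.image (fun j => s(some j, par j))
      ⊆ Finset.univ.filter (fun e : Sym2 (Option V) => e ∈ (aug G).edgeSet) := by
    simp only [Finset.subset_iff, Finset.mem_image, Finset.mem_filter, Finset.mem_univ,
      true_and, forall_exists_index]
    rintro _ j rfl
    rw [SimpleGraph.mem_edgeSet, aug, SimpleGraph.fromRel_adj]
    cases h : par j with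
    | none => simp
    | some k => exact ⟨by simpa using (hpar j k h).ne, Or.inl (hpar j k h)⟩
  calc _ ≤ ∏ e ∈ Finset.univ.image (fun j => s(some j, par j)), gibbs β ε t s e :=
        Finset.prod_le_prod_of_subset_of_le_one hsub (fun e _ => (gibbs_pos β ε t s e).le)
          fun e he _ => gibbs_le_one hβpos hε t s (Finset.mem_filter.1 he).2
    _ = _ := by
        rw [Finset.prod_image fun j _ k _ h => hinj h]
        exact Finset.prod_congr rfl fun j _ => gibbs_mk hβ ε t s _ _

lemma dens_mul_obs_le (hβ : ∀ i j, β i j = β j i) (hβpos : ∀ i j, G.Adj i j → 0 < β i j)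
    (hε : ∀ i, 0 ≤ ε i) (hpar : ∀ j k, par j = some k → G.Adj j k)
    (hT : ↑T ⊆ (aug G).edgeSet) {pv : V → ℝ} {x y : V} (hpy : 0 ≤ pv y) (hpx : 0 < pv x)
    (t s : V → ℝ) :
    dens G β ε t s T * obs pv x y t T ≤ (∏ e ∈ T, treeW β ε 0 e) / pv x *
      (exp ((2 * T.card + 2) * ∑ k, |t k|) *
        ∏ j, exp (-(bres β ε (some j) (par j) * (Bfun t s (some j) (par j) - 1)))) := by
  set S := ∑ k, |t k|
  have hgibbs := prod_gibbs_le_prod_parent hr hβ hβpos hε hpar t s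
  have htree := prod_treeW_le hβ hβpos hε hT t
  have htree₀ : 0 ≤ ∏ e ∈ T, treeW β ε 0 e :=
    Finset.prod_nonneg fun e he => treeW_nonneg hβpos hε 0 (hT he)
  calc dens G β ε t s T * obs pv x y t T
      ≤ exp S * (∏ j, exp (-(bres β ε (some j) (par j) * (Bfun t s (some j) (par j) - 1))))
          * ((∏ e ∈ T, treeW β ε 0 e) * exp (2 * T.card * S)) * (exp S / pv x) := by
        refine mul_le_mul (mul_le_mul (mul_le_mul (prod_exp_neg_div_two_pi_le t) hgibbs
          (Finset.prod_nonneg fun e _ => (gibbs_pos β ε t s e).le) (exp_pos _).le) htree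
          (Finset.prod_nonneg fun e he => treeW_nonneg hβpos hε t (hT he)) (by positivity))
          (obs_le hpy hpx t T) (obs_nonneg hpy hpx t T) (mul_nonneg (by positivity)
            (mul_nonneg htree₀ (exp_pos _).le))
    _ = _ := by
        rw [show (2 * T.card + 2) * S = S + 2 * T.card * S + S by ring, exp_add, exp_add]
        ring

theorem integrable_dens_mul_obs (hβ : ∀ i j, β i j = β j i)
    (hβpos : ∀ i j, G.Adj i j → 0 < β i j) (hε : ∀ i, 0 ≤ ε i)
    (hpar : ∀ j k, par j = some k → G.Adj j k) (hb : ∀ j, 0 < bres β ε (some j) (par j))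
    (hT : ↑T ⊆ (aug G).edgeSet) {pv : V → ℝ} {x y : V} (hpy : 0 ≤ pv y) (hpx : 0 < pv x) :
    Integrable fun q : (V → ℝ) × (V → ℝ) => dens G β ε q.1 q.2 T * obs pv x y q.1 T := by
  refine ((integrable_exp_mul_prod_exp_neg_mul_Bfun_parent hr hb (A := 2 * T.card + 2)
    (by positivity)).const_mul ((∏ e ∈ T, treeW β ε 0 e) / pv x)).mono'
    (Measurable.aestronglyMeasurable ?_) (ae_of_all _ fun q => ?_)
  · simp only [dens, obs]
    fun_prop
  · rw [norm_of_nonneg (mul_nonneg (dens_nonneg hβpos hε hT _ _) (obs_nonneg hpy hpx _ T))]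
    exact dens_mul_obs_le hr hβ hβpos hε hpar hT hpy hpx q.1 q.2

end ParentForest

theorem integrable_dens_mul_obs_of_connected (hG : G.Connected) (hβ : ∀ i j, β i j = β j i)
    (hβpos : ∀ i j, G.Adj i j → 0 < β i j) (hε : ∀ i, 0 ≤ ε i) {z : V} (hεz : 0 < ε z)
    (hT : ↑T ⊆ (aug G).edgeSet) {pv : V → ℝ} {x y : V} (hpy : 0 ≤ pv y) (hpx : 0 < pv x) :
    Integrable fun q : (V → ℝ) × (V → ℝ) => dens G β ε q.1 q.2 T * obs pv x y q.1 T := by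
  choose p hp using fun j : V => (exists_adj_dist_lt_of_connected hG (z := z) (j := j) ·)
  let par : V → Option V := fun j => if h : j = z then none else some (p j h)
  have hpar : ∀ j k, par j = some k → G.Adj j k ∧ G.dist z k < G.dist z j := by
    intro j k h
    by_cases hj : j = z
    · simp [par, hj] at h
    · obtain rfl : p j hj = k := by simpa [par, hj] using h
      exact hp j hj
  refine integrable_dens_mul_obs (r := G.dist z) (fun j k h => (hpar j k h).2) hβ hβpos hε
    (fun j k h => (hpar j k h).1) (fun j => ?_) hT hpy hpx
  by_cases hj : j = z
  · simpa [par, hj, bres] using hεz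
  · simpa [par, hj, bres] using hβpos j _ (hp j hj).1

lemma bres_eq_of_mem {ε' : V → ℝ} (hroots : ∀ i ∈ roots T, ε i = ε' i) {a b : Option V}
    (h : s(a, b) ∈ T) : bres β ε a b = bres β ε' a b := by
  have hroot : ∀ i, rootEdge i ∈ T → ε i = ε' i := fun i hi => hroots i (by simp [roots, hi])
  cases a <;> cases b
  · rfl
  · exact hroot _ (by rwa [rootEdge, Sym2.eq_swap])
  · exact hroot _ h
  · rfl

lemma dens_le_dens_of_le {ε' : V → ℝ} (hβpos : ∀ i j, G.Adj i j → 0 < β i j)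
    (hε' : ∀ i, 0 ≤ ε' i) (hle : ∀ i, ε' i ≤ ε i)
    (hT : ↑T ⊆ (aug G).edgeSet) (hroots : ∀ i ∈ roots T, ε i = ε' i) (t s : V → ℝ) :
    dens G β ε t s T ≤ dens G β ε' t s T := by
  have htree : ∏ e ∈ T, treeW β ε t e = ∏ e ∈ T, treeW β ε' t e := by
    refine Finset.prod_congr rfl fun e he => ?_
    induction e using Sym2.ind with
    | _ a b =>
      rw [treeW, treeW, esym_mk, esym_mk, bres_eq_of_mem hroots he,
        bres_eq_of_mem hroots (by rwa [Sym2.eq_swap])]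
  rw [dens, dens, htree]
  refine mul_le_mul_of_nonneg_right (mul_le_mul_of_nonneg_left ?_ ?_) ?_
  · exact Finset.prod_le_prod (fun e _ => (gibbs_pos β ε t s e).le)
      fun e _ => gibbs_anti hle t s e
  · exact Finset.prod_nonneg fun j _ => by positivity
  · exact Finset.prod_nonneg fun e he => treeW_nonneg hβpos hε' t (hT he)

lemma dens_pinOf_mul_obs_le {pv : V → ℝ} {c : ℝ} {x y : V}
    (hβpos : ∀ i j, G.Adj i j → 0 < β i j) (hpv : ∀ i, 0 ≤ pv i) (hpx : 0 < pv x) (hc : 0 ≤ c) (hT : ↑T ⊆ (aug G).edgeSet) (t s : V → ℝ) :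
    dens G β (pinOf pv c) t s T * (obs pv x y t T * (if roots T = {x} then 1 else 0))
      ≤ dens G β (singlePin x (pv x * c)) t s T * obs pv x y t T := by
  have hobs := obs_nonneg (y := y) (hpv y) hpx t T
  split_ifs with hroots
  · rw [mul_one]
    refine mul_le_mul_of_nonneg_right (dens_le_dens_of_le hβpos
      (singlePin_nonneg (mul_nonneg (hpv x) hc)) (singlePin_le_pinOf hpv hc) hT
      (fun i hi => ?_) t s) hobs
    rw [hroots, Finset.mem_singleton] at hi
    simp [hi, pinOf, singlePin]
  · rw [mul_zero, mul_zero]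
    exact mul_nonneg (dens_nonneg hβpos (singlePin_nonneg (mul_nonneg (hpv x) hc)) hT t s)
      hobs

end

theorem stmt_8_general {V : Type*} [Fintype V] [DecidableEq V]
    (G : SimpleGraph V) (hG : G.Connected)
    (β : V → V → ℝ) (hβsymm : ∀ i j, β i j = β j i)
    (hβpos : ∀ i j, G.Adj i j → 0 < β i j)
    (x y : V)
    (pv : V → ℝ) (hpv : ∀ i, 0 ≤ pv i) (hpx : 0 < pv x)
    (ε : ℝ) (hε : 0 < ε) :
    expect G β (pinOf pv ε)
        (fun t _ T => obs pv x y t T * (if roots T = {x} then 1 else 0))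
      ≤ Real.exp (∑ i ∈ Finset.univ.erase x, pv i * ε) *
          expect G β (singlePin x (pv x * ε)) (fun t _ T => obs pv x y t T) := by
  have hsingle := singlePin_nonneg (x := x) (mul_pos hpx hε).le
  have hC : 1 ≤ exp (∑ i ∈ Finset.univ.erase x, pv i * ε) :=
    one_le_exp (Finset.sum_nonneg fun i _ => pinOf_nonneg hpv hε.le i)
  rw [expect, expect, Finset.mul_sum]
  refine Finset.sum_le_sum fun T hT => ?_
  have hTG : ↑T ⊆ (aug G).edgeSet := ((Finset.mem_filter.1 hT).2 : IsSpanningTree _ T).1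
  have hint := integrable_dens_mul_obs_of_connected hG hβsymm hβpos hsingle (z := x)
    (by simpa [singlePin] using mul_pos hpx hε) hTG (y := y) (hpv y) hpx
  have hpos : ∀ q : (V → ℝ) × (V → ℝ), 0 ≤ dens G β (pinOf pv ε) q.1 q.2 T *
      (obs pv x y q.1 T * (if roots T = {x} then 1 else 0)) := fun q =>
    mul_nonneg (dens_nonneg hβpos (pinOf_nonneg hpv hε.le) hTG _ _)
      (mul_nonneg (obs_nonneg (hpv y) hpx _ T) (by split_ifs <;> norm_num))
  calc _ ≤ ∫ q : (V → ℝ) × (V → ℝ), dens G β (singlePin x (pv x * ε)) q.1 q.2 T *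
        obs pv x y q.1 T :=
        integral_mono_of_nonneg (ae_of_all _ hpos) hint (ae_of_all _ fun q =>
          dens_pinOf_mul_obs_le hβpos hpv hpx hε.le hTG q.1 q.2)
    _ ≤ _ := le_mul_of_one_le_left (integral_nonneg fun q => mul_nonneg
        (dens_nonneg hβpos hsingle hTG _ _) (obs_nonneg (hpv y) hpx _ T)) hC

/-- contribution of one root, fixed `ε`: for all `ε > 0`, with pinning
`ε = (π_i ε)_{i∈V}`,
`E_{μ^ε}[O^π_{xy} 1{R(T)={x}}] ≤ e^{Σ_{i∈V∖{x}} ε_i} E_{μ^{ε_xδ_x}}[O^π_{xy}]`. -/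
theorem stmt_8 {V : Type*} [Fintype V] [DecidableEq V]
    (G : SimpleGraph V) (hG : G.Connected)
    (β : V → V → ℝ) (hβsymm : ∀ i j, β i j = β j i)
    (hβpos : ∀ i j, G.Adj i j → 0 < β i j)
    (x y : V) (hxy : x ≠ y)
    (pv : V → ℝ) (hpv : ∀ i, 0 ≤ pv i) (hpx : 0 < pv x) (hpy : 0 < pv y)
    (ε : ℝ) (hε : 0 < ε) :
    expect G β (pinOf pv ε)
        (fun t _ T => obs pv x y t T * (if roots T = {x} then 1 else 0))
      ≤ Real.exp (∑ i ∈ Finset.univ.erase x, pv i * ε) *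
          expect G β (singlePin x (pv x * ε)) (fun t _ T => obs pv x y t T) :=
  stmt_8_general G hG β hβsymm hβpos x y pv hpv hpx ε hε

end H22
end

section
/- For every ε>0, ∫_{ℝ²} exp[−ε(cosh t − 1 + ½ s² e^{t})] ds dt = 2π/ε; equivalently, the function (t,s) ↦ (ε/(2π)) exp[−ε(cosh t − 1 + ½ s² e^{t})] is a probability density on ℝ². -/
/-!
Integrating out `s` is a Gaussian integral, `√(2π / (ε eᵗ))`, which leaves the
one-dimensional integral of `exp (-ε (cosh t - 1) - t / 2)`. Since `cosh t - 1 = 2 sinh² (t / 2)`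
is even, the odd part of `exp (-t / 2) = cosh (t / 2) - sinh (t / 2)` integrates to zero, and the
substitution `w = sinh (t / 2)` turns the remaining `cosh (t / 2)`-weighted integral into the
Gaussian integral `2 ∫ exp (-2 ε w²) dw = √(2π / ε)`.
-/

open MeasureTheory Real

theorem cosh_two_mul_sub_one (x : ℝ) : cosh (2 * x) - 1 = 2 * sinh x ^ 2 := by
  rw [cosh_two_mul, cosh_sq]; ring

section SinhSubstitution

variable {E : Type*} [NormedAddCommGroup E] [NormedSpace ℝ E]

theorem integrable_cosh_smul_comp_sinh_iff (g : ℝ → E) :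
    (Integrable fun t => cosh t • g (sinh t)) ↔ Integrable g := by
  have := integrableOn_image_iff_integrableOn_abs_deriv_smul MeasurableSet.univ
    (fun t _ => (hasDerivAt_sinh t).hasDerivWithinAt) sinh_injective.injOn g
  simpa [sinh_surjective.range_eq, abs_of_pos (cosh_pos _)] using this.symm

theorem integral_cosh_smul_comp_sinh (g : ℝ → E) :
    ∫ t, cosh t • g (sinh t) = ∫ x, g x := by
  have := integral_image_eq_integral_abs_deriv_smul MeasurableSet.univ
    (fun t _ => (hasDerivAt_sinh t).hasDerivWithinAt) sinh_injective.injOn g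
  simpa [sinh_surjective.range_eq, abs_of_pos (cosh_pos _)] using this.symm

end SinhSubstitution

theorem MeasureTheory.Integrable.mul_sinh_of_mul_cosh {g : ℝ → ℝ}
    (hg : Integrable fun t => g t * cosh t) :
    Integrable fun t => g t * sinh t := by
  have htanh : Continuous fun t => sinh t / cosh t :=
    continuous_sinh.div continuous_cosh fun t => (cosh_pos t).ne'
  refine (hg.mul_bdd htanh.aestronglyMeasurable (c := 1) (ae_of_all _ fun t => ?_)).congr
    (ae_of_all _ fun t => ?_)
  · simpa [← tanh_eq_sinh_div_cosh] using (abs_tanh_lt_one t).le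
  · field_simp [(cosh_pos t).ne']

theorem integral_mul_exp_neg_eq_integral_mul_cosh {g : ℝ → ℝ} (heven : ∀ t, g (-t) = g t)
    (hg : Integrable fun t => g t * cosh t) :
    (Integrable fun t => g t * exp (-t)) ∧ ∫ t, g t * exp (-t) = ∫ t, g t * cosh t := by
  have hsinh := hg.mul_sinh_of_mul_cosh
  have hodd : ∫ t, g t * sinh t = 0 := by
    have := integral_neg_eq_self (fun t => g t * sinh t) volume
    simp only [heven, sinh_neg, mul_neg, integral_neg] at this
    linarith
  have hexp : (fun t => g t * exp (-t)) = fun t => g t * cosh t - g t * sinh t := by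
    funext t; rw [← cosh_sub_sinh]; ring
  rw [hexp, integral_sub hg hsinh, hodd, sub_zero]
  exact ⟨hg.sub hsinh, rfl⟩

theorem integrable_exp_neg_mul_sinh_sq_mul_cosh {b : ℝ} (hb : 0 < b) :
    Integrable fun u => exp (-b * sinh u ^ 2) * cosh u := by
  simpa only [smul_eq_mul, mul_comm (cosh _)] using
    (integrable_cosh_smul_comp_sinh_iff fun x => exp (-b * x ^ 2)).2 (integrable_exp_neg_mul_sq hb)

theorem integral_exp_neg_mul_sinh_sq_mul_cosh (b : ℝ) :
    ∫ u, exp (-b * sinh u ^ 2) * cosh u = √(π / b) := by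
  simpa only [smul_eq_mul, mul_comm (cosh _)] using
    (integral_cosh_smul_comp_sinh fun x => exp (-b * x ^ 2)).trans (integral_gaussian b)

theorem exp_neg_mul_cosh_sub_one_eq (ε t : ℝ) :
    exp (-(ε * (cosh t - 1))) = exp (-(2 * ε) * sinh (t / 2) ^ 2) := by
  have h := cosh_two_mul_sub_one (t / 2)
  rw [mul_div_cancel₀ t two_ne_zero] at h
  rw [h]; ring_nf

theorem integrable_exp_neg_mul_cosh_sub_one_mul_exp_neg_half {ε : ℝ} (hε : 0 < ε) :
    Integrable fun t => exp (-(ε * (cosh t - 1))) * exp (-(t / 2)) := by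
  simp only [exp_neg_mul_cosh_sub_one_eq]
  exact (integral_mul_exp_neg_eq_integral_mul_cosh (by simp)
    (integrable_exp_neg_mul_sinh_sq_mul_cosh (by positivity))).1.comp_div two_ne_zero

theorem integral_exp_neg_mul_cosh_sub_one_mul_exp_neg_half {ε : ℝ} (hε : 0 < ε) :
    ∫ t, exp (-(ε * (cosh t - 1))) * exp (-(t / 2)) = √(2 * π / ε) := by
  simp only [exp_neg_mul_cosh_sub_one_eq]
  rw [Measure.integral_comp_div (fun u => exp (-(2 * ε) * sinh u ^ 2) * exp (-u)),
    (integral_mul_exp_neg_eq_integral_mul_cosh (by simp)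
      (integrable_exp_neg_mul_sinh_sq_mul_cosh (by positivity))).2,
    integral_exp_neg_mul_sinh_sq_mul_cosh, abs_two, smul_eq_mul,
    show 2 * π / ε = 2 ^ 2 * (π / (2 * ε)) by field_simp,
    sqrt_mul (by positivity), sqrt_sq zero_le_two]

theorem exp_neg_cosh_add_sq_eq (ε t s : ℝ) :
    exp (-(ε * (cosh t - 1 + 1 / 2 * s ^ 2 * exp t)))
      = exp (-(ε * (cosh t - 1))) * exp (-(ε * exp t / 2) * s ^ 2) := by
  rw [← exp_add]; ring_nf

theorem sqrt_pi_div_mul_exp (ε t : ℝ) :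
    √(π / (ε * exp t / 2)) = √(2 * π / ε) * exp (-(t / 2)) := by
  rw [show π / (ε * exp t / 2) = 2 * π / ε * exp (-t) by rw [exp_neg]; field_simp,
    sqrt_mul' _ (exp_pos _).le, ← exp_half, neg_div]

/-- for every `ε > 0`,
`∫_{ℝ²} exp[−ε(cosh t − 1 + ½ s² e^t)] ds dt = 2π/ε`; equivalently,
`(t,s) ↦ (ε/(2π)) exp[−ε(cosh t − 1 + ½ s² e^t)]` is a probability density on `ℝ²`. -/
theorem stmt_16 (ε : ℝ) (hε : 0 < ε) :
    ∫ p : ℝ × ℝ,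
        Real.exp (-(ε * (Real.cosh p.1 - 1 + (1 / 2) * p.2 ^ 2 * Real.exp p.1)))
      = 2 * Real.pi / ε := by
  have hsection (t : ℝ) :
      Integrable fun s => exp (-(ε * (cosh t - 1))) * exp (-(ε * exp t / 2) * s ^ 2) :=
    (integrable_exp_neg_mul_sq (by positivity)).const_mul _
  have hinner (t : ℝ) :
      ∫ s, exp (-(ε * (cosh t - 1))) * exp (-(ε * exp t / 2) * s ^ 2)
        = √(2 * π / ε) * (exp (-(ε * (cosh t - 1))) * exp (-(t / 2))) := by
    rw [integral_const_mul, integral_gaussian, sqrt_pi_div_mul_exp]; ring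
  have hint : Integrable (fun p : ℝ × ℝ =>
      exp (-(ε * (cosh p.1 - 1))) * exp (-(ε * exp p.1 / 2) * p.2 ^ 2)) (volume.prod volume) := by
    refine (integrable_prod_iff (by fun_prop)).2 ⟨ae_of_all _ hsection, ?_⟩
    simp only [norm_of_nonneg (mul_pos (exp_pos _) (exp_pos _)).le, hinner]
    exact (integrable_exp_neg_mul_cosh_sub_one_mul_exp_neg_half hε).const_mul _
  simp only [exp_neg_cosh_add_sq_eq]
  rw [Measure.volume_eq_prod, integral_prod _ hint]
  simp only [hinner]
  rw [integral_const_mul, integral_exp_neg_mul_cosh_sub_one_mul_exp_neg_half hε,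
    mul_self_sqrt (by positivity)]
end
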